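/- arXiv:2506.06125 — 3 statements merged into one kernel-verified Lean document; each statement's English description precedes it below -/
import Mathlib

section
/- The DLR hierarchy is monotone: if Λ ⊆ Λ' ⊆ V and ν' ∈ LP_{Λ',DLR}, then the marginal of ν' on Σ^{Λ̄} belongs to LP_{Λ,DLR}. Consequently, for every f supported on Λ, min{ν'(f) : ν' ∈ LP_{Λ',DLR}} ≥ min{ν(f) : ν ∈ LP_{Λ,DLR}} and max{ν'(f) : ν' ∈ LP_{Λ',DLR}} ≤ max{ν(f) : ν ∈ LP_{Λ,DLR}}. -/
namespace GibbsLP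

variable {V : Type*} [Fintype V] [DecidableEq V]

/-- Spin configurations on the vertex set `V`; the two spin values `-1, +1` are
encoded by the two-element type `Bool`. -/
abbrev Config (V : Type*) := V → Bool

/-- The configuration `x` with the spin at site `i` flipped (denoted `xⁱ` in the paper). -/
def flip (x : Config V) (i : V) : Config V := Function.update x i (!x i)

/-- Discrete gradient `∇ᵢ f (x) = f(xⁱ) - f(x)`. -/
def grad (f : Config V → ℝ) (i : V) (x : Config V) : ℝ := f (flip x i) - f x

/-- `f` depends only on the spins in `Λ`, i.e. `supp f ⊆ Λ`. -/
def SupportedOn (f : Config V → ℝ) (Λ : Set V) : Prop :=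
  ∀ i ∉ Λ, ∀ x, f (flip x i) = f x

/-- The support `supp f = {i : ∇ᵢ f ≠ 0}` of an observable. -/
def sptSet (f : Config V → ℝ) : Set V := {i | ∃ x, f (flip x i) ≠ f x}

/-- Sup norm of an observable. -/
noncomputable def supNorm {α : Type*} (f : α → ℝ) : ℝ := ⨆ x, |f x|

/-- The Hamiltonian `H(x) = β ∑_{{i,j} ∈ E} h_{ij}(x_i, x_j)`; each unordered edge is
counted once (hence the factor `1/2` for the ordered double sum). -/
noncomputable def ham (G : SimpleGraph V) [DecidableRel G.Adj] (β : ℝ)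
    (h : V → V → Bool → Bool → ℝ) (x : Config V) : ℝ :=
  β * ((1 : ℝ) / 2 * ∑ i : V, ∑ j : V, if G.Adj i j then h i j (x i) (x j) else 0)

/-- The Gibbs distribution `μ(x) = e^{-H(x)} / Z`. -/
noncomputable def gibbs (H : Config V → ℝ) (x : Config V) : ℝ :=
  Real.exp (-H x) / ∑ y : Config V, Real.exp (-H y)

/-- `ν` is a probability distribution. -/
def IsDist {α : Type*} [Fintype α] (ν : α → ℝ) : Prop :=
  (∀ a, 0 ≤ ν a) ∧ ∑ a, ν a = 1

/-- Spin configurations on a subset `A ⊆ V`. -/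
abbrev SubConfig {V : Type*} (A : Finset V) := {i : V // i ∈ A} → Bool

/-- Restriction of a configuration to `A`. -/
def restrict (A : Finset V) (x : Config V) : SubConfig A := fun i => x i.1

/-- Extension of a configuration on `A` to all of `V` (by an arbitrary fixed value outside). -/
def extendC (A : Finset V) (y : SubConfig A) : Config V :=
  fun i => if h : i ∈ A then y ⟨i, h⟩ else true

/-- Flip the spin of `y : SubConfig A` at site `i` (identity if `i ∉ A`). -/
def flipAt (A : Finset V) (y : SubConfig A) (i : V) : SubConfig A :=
  fun j => if j.1 = i then !(y j) else y j

/-- External boundary `∂ᵉˣ Λ = {j ∉ Λ : ∃ i ∈ Λ, {i,j} ∈ E}`. -/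
def extBoundary (G : SimpleGraph V) [DecidableRel G.Adj] (Λ : Finset V) : Finset V :=
  Finset.univ.filter fun j => j ∉ Λ ∧ ∃ i ∈ Λ, G.Adj i j

/-- External boundary of a set of vertices (set version). -/
def extBoundarySet (G : SimpleGraph V) (A : Set V) : Set V :=
  {j | j ∉ A ∧ ∃ i ∈ A, G.Adj i j}

/-- `Λ̄ = Λ ∪ ∂ᵉˣ Λ`. -/
def closure (G : SimpleGraph V) [DecidableRel G.Adj] (Λ : Finset V) : Finset V :=
  Λ ∪ extBoundary G Λ

/-- `∇ᵢ H` evaluated on a configuration on `A` (well defined for `i ∈ Λ`, `A = Λ̄`, since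
then `∇ᵢ H` only depends on the spins in `Λ̄`). -/
noncomputable def gradH (A : Finset V) (H : Config V → ℝ) (i : V) (y : SubConfig A) : ℝ :=
  H (flip (extendC A y) i) - H (extendC A y)

/-- Expectation `ν(f)` of an observable `f` supported in `A` under a distribution `ν` on
`Σ^A`. -/
noncomputable def lexp {A : Finset V} (ν : SubConfig A → ℝ) (f : Config V → ℝ) : ℝ :=
  ∑ y : SubConfig A, ν y * f (extendC A y)

/-- The DLR linear program: distributions on `Σ^{Λ̄}` satisfying the local spin-flip
equations `ν(y) = ν(yⁱ) e^{∇ᵢH(y)}` for all `y` and `i ∈ Λ`. -/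
def LPdlr (G : SimpleGraph V) [DecidableRel G.Adj] (H : Config V → ℝ) (Λ : Finset V) :
    Set (SubConfig (closure G Λ) → ℝ) :=
  {ν | IsDist ν ∧ ∀ y, ∀ i ∈ Λ,
      ν y = ν (flipAt (closure G Λ) y i) * Real.exp (gradH (closure G Λ) H i y)}

/-- Values `ν(f)` over feasible points `ν` of the DLR linear program. -/
def dlrVals (G : SimpleGraph V) [DecidableRel G.Adj] (H : Config V → ℝ) (Λ : Finset V)
    (f : Config V → ℝ) : Set ℝ :=
  {t | ∃ ν ∈ LPdlr G H Λ, t = lexp ν f}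

/-- Marginal of a distribution `μ` on `Σ^V` on the sites in `A`. -/
noncomputable def marg (A : Finset V) (μ : Config V → ℝ) : SubConfig A → ℝ :=
  fun y => ∑ x : Config V, if restrict A x = y then μ x else 0

/-- The Hamiltonian truncated to `Λ` with boundary condition `η` on `∂ᵉˣ Λ`. -/
noncomputable def hamLoc (G : SimpleGraph V) [DecidableRel G.Adj] (β : ℝ)
    (h : V → V → Bool → Bool → ℝ) (Λ : Finset V)
    (η : SubConfig (extBoundary G Λ)) (x : SubConfig Λ) : ℝ :=
  β * ((1 : ℝ) / 2 * (∑ i ∈ Λ.attach, ∑ j ∈ Λ.attach,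
        if G.Adj i.1 j.1 then h i.1 j.1 (x i) (x j) else 0)
    + ∑ i ∈ Λ.attach, ∑ j ∈ (extBoundary G Λ).attach,
        if G.Adj i.1 j.1 then h i.1 j.1 (x i) (η j) else 0)

/-- The local Gibbs state `μ_Λ^η` on `Λ` with boundary condition `η`. -/
noncomputable def gibbsLoc (G : SimpleGraph V) [DecidableRel G.Adj] (β : ℝ)
    (h : V → V → Bool → Bool → ℝ) (Λ : Finset V)
    (η : SubConfig (extBoundary G Λ)) (x : SubConfig Λ) : ℝ :=
  Real.exp (-(hamLoc G β h Λ η x)) /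
    ∑ x' : SubConfig Λ, Real.exp (-(hamLoc G β h Λ η x'))

/-- Expectation `μ_Λ^η(f)` of an observable supported in `Λ` under the local Gibbs state. -/
noncomputable def gibbsLocExp (G : SimpleGraph V) [DecidableRel G.Adj] (β : ℝ)
    (h : V → V → Bool → Bool → ℝ) (Λ : Finset V)
    (η : SubConfig (extBoundary G Λ)) (f : Config V → ℝ) : ℝ :=
  ∑ x : SubConfig Λ, gibbsLoc G β h Λ η x * f (extendC Λ x)

/-- Combine `x ∈ Σ^Λ` and `η ∈ Σ^{∂ᵉˣΛ}` into a configuration `(x, η) ∈ Σ^{Λ̄}`. -/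
def glue (G : SimpleGraph V) [DecidableRel G.Adj] (Λ : Finset V)
    (x : SubConfig Λ) (η : SubConfig (extBoundary G Λ)) : SubConfig (closure G Λ) :=
  fun i => if h : i.1 ∈ Λ then x ⟨i.1, h⟩
    else η ⟨i.1, by
      have hi := i.2
      simp only [closure, Finset.mem_union] at hi
      tauto⟩

/-- A local (single-site, finite-range, bounded-rate) Markov chain on `Σ^V`. -/
structure IsLocalMC (G : SimpleGraph V) (P : Config V → Config V → ℝ) : Prop where
  nonneg : ∀ x x', 0 ≤ P x x'
  rowSum : ∀ x, ∑ x', P x x' = 1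
  /-- `P_{x,x'} = 0` if `x'` differs from `x` on more than one site. -/
  singleSite : ∀ x x', x' ≠ x → (∀ i, x' ≠ flip x i) → P x x' = 0
  /-- `P_{x,xⁱ}` only depends on the spins in the closed neighborhood of `i`. -/
  locality : ∀ i : V, ∀ x x' : Config V, x i = x' i →
      (∀ j, G.Adj i j → x j = x' j) → P x (flip x i) = P x' (flip x' i)
  /-- `P_{x,x'} ≤ 1/n` off the diagonal. -/
  bounded : ∀ x x', x ≠ x' → P x x' ≤ 1 / (Fintype.card V : ℝ)

/-- The Markov-chain linear program: distributions on `Σ^{Λ̄}` satisfying the stationarity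
equations `ν(Pg) = ν(g)` for all `g` supported on `Λ`. -/
def LPmc (G : SimpleGraph V) [DecidableRel G.Adj] (P : Config V → Config V → ℝ)
    (Λ : Finset V) : Set (SubConfig (closure G Λ) → ℝ) :=
  {ν | IsDist ν ∧ ∀ g : Config V → ℝ, SupportedOn g ↑Λ →
      lexp ν ((Matrix.of P).mulVec g) = lexp ν g}

/-- Values `ν(f)` over feasible points `ν` of the Markov-chain linear program. -/
def mcVals (G : SimpleGraph V) [DecidableRel G.Adj] (P : Config V → Config V → ℝ)
    (Λ : Finset V) (f : Config V → ℝ) : Set ℝ :=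
  {t | ∃ ν ∈ LPmc G P Λ, t = lexp ν f}

/-- The heat-bath dynamics: site `i` is flipped with probability
`c(i,x) = e^{-∇ᵢH(x)} / (1 + e^{-∇ᵢH(x)})`, each site being selected with probability `1/n`. -/
noncomputable def heatBath (H : Config V → ℝ) (x x' : Config V) : ℝ :=
  if x' = x then
    1 - (∑ i : V, Real.exp (-(grad H i x)) / (1 + Real.exp (-(grad H i x)))) /
      (Fintype.card V : ℝ)
  else
    ∑ i : V, if x' = flip x i then
      (Real.exp (-(grad H i x)) / (1 + Real.exp (-(grad H i x)))) / (Fintype.card V : ℝ)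
    else 0

/-- Marginal on `Σ^A` of a distribution on `Σ^B`, for `A ⊆ B`. -/
noncomputable def margTo {A B : Finset V} (hAB : A ⊆ B) (ν : SubConfig B → ℝ) :
    SubConfig A → ℝ :=
  fun z => ∑ y : SubConfig B,
    if (fun i : {i : V // i ∈ A} => y ⟨i.1, hAB i.2⟩) = z then ν y else 0

theorem closure_mono (G : SimpleGraph V) [DecidableRel G.Adj] {Λ Λ' : Finset V}
    (hs : Λ ⊆ Λ') : closure G Λ ⊆ closure G Λ' := by
  intro j hj
  simp only [closure, Finset.mem_union, extBoundary, Finset.mem_filter, Finset.mem_univ,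
    true_and] at hj ⊢
  by_cases hjΛ' : j ∈ Λ'
  · exact Or.inl hjΛ'
  · rcases hj with hj | ⟨hjn, i, hiΛ, hadj⟩
    · exact absurd (hs hj) hjΛ'
    · exact Or.inr ⟨hjΛ', i, hs hiΛ, hadj⟩

end GibbsLP

/-!
For `i ∈ Λ`, restricting a configuration from `Λ̄'` to `Λ̄` commutes with flipping spin `i`, and
`∇ᵢH` only sees the closed neighbourhood of `i`, which lies in `Λ̄`. Summing the DLR equation at
`i` over the spins in `Λ̄' \ Λ̄` therefore gives the DLR equation at `i` for the marginal. An
observable supported on `Λ` has the same expectation under `ν'` and under its marginal, so the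
values of the `Λ'`-program form a subset of those of the `Λ`-program, and the bounded sets of
values have nested infima and suprema.
-/

namespace GibbsLP

section

variable {V : Type*} [DecidableEq V]

lemma SupportedOn.mono {f : Config V → ℝ} {S T : Set V} (hf : SupportedOn f S) (hST : S ⊆ T) :
    SupportedOn f T :=
  fun i hi => hf i fun hiS => hi (hST hiS)

lemma SupportedOn.apply_update {f : Config V → ℝ} {S : Set V} (hf : SupportedOn f S) {i : V}
    (hi : i ∉ S) (x : Config V) (b : Bool) : f (Function.update x i b) = f x := by
  by_cases hb : b = x i
  · rw [hb, Function.update_eq_self]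
  · rw [Bool.eq_not.mpr hb]
    exact hf i hi x

lemma SupportedOn.apply_piecewise {f : Config V → ℝ} {S : Set V} (hf : SupportedOn f S)
    (D : Finset V) (hD : ∀ i ∈ D, i ∉ S) (x x' : Config V) : f (D.piecewise x' x) = f x := by
  induction D using Finset.induction_on with
  | empty => rw [Finset.piecewise_empty]
  | insert j D _ ih =>
    rw [Finset.piecewise_insert, hf.apply_update (hD j (Finset.mem_insert_self j D)),
      ih fun i hi => hD i (Finset.mem_insert_of_mem hi)]

/-- `margTo hAB` is the pushforward along this map. -/
def restrictTo {A B : Finset V} (hAB : A ⊆ B) (y : SubConfig B) : SubConfig A :=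
  fun k => y ⟨k.1, hAB k.2⟩

lemma extendC_restrictTo_eqOn {A B : Finset V} (hAB : A ⊆ B) (y : SubConfig B) :
    Set.EqOn (extendC A (restrictTo hAB y)) (extendC B y) A := by
  intro k hk
  simp [extendC, restrictTo, Finset.mem_coe.mp hk, hAB hk]

lemma restrictTo_flipAt {A B : Finset V} (hAB : A ⊆ B) (y : SubConfig B) (i : V) :
    restrictTo hAB (flipAt B y i) = flipAt A (restrictTo hAB y) i :=
  rfl

lemma flipAt_flipAt (A : Finset V) (y : SubConfig A) (i : V) :
    flipAt A (flipAt A y i) i = y := by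
  funext j
  by_cases hj : j.1 = i <;> simp [flipAt, hj]

lemma IsDist.abs_lexp_le {A : Finset V} {ν : SubConfig A → ℝ} (hν : IsDist ν)
    (f : Config V → ℝ) : |lexp ν f| ≤ ∑ z : SubConfig A, |f (extendC A z)| := by
  refine (Finset.abs_sum_le_sum_abs _ _).trans (Finset.sum_le_sum fun z _ => ?_)
  have hν_le_one : ν z ≤ 1 :=
    hν.2 ▸ Finset.single_le_sum (fun a _ => hν.1 a) (Finset.mem_univ z)
  rw [abs_mul, abs_of_nonneg (hν.1 z)]
  exact mul_le_of_le_one_left (abs_nonneg _) hν_le_one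

lemma IsDist.margTo {A B : Finset V} (hAB : A ⊆ B) {ν : SubConfig B → ℝ} (hν : IsDist ν) :
    IsDist (margTo hAB ν) := by
  refine ⟨fun z => Finset.sum_nonneg fun y _ => ?_, ?_⟩
  · split_ifs
    exacts [hν.1 y, le_rfl]
  · change ∑ z, ∑ y, (if restrictTo hAB y = z then ν y else 0) = 1
    rw [Finset.sum_comm]
    simpa using hν.2

lemma margTo_eq_margTo_flipAt_mul {A B : Finset V} (hAB : A ⊆ B) {ν : SubConfig B → ℝ}
    {i : V} (w : SubConfig A → ℝ) (hν : ∀ y, ν y = ν (flipAt B y i) * w (restrictTo hAB y))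
    (z : SubConfig A) : margTo hAB ν z = margTo hAB ν (flipAt A z i) * w z := by
  change ∑ y, (if restrictTo hAB y = z then ν y else 0) =
    (∑ y, if restrictTo hAB y = flipAt A z i then ν y else 0) * w z
  rw [Finset.sum_mul]
  refine Fintype.sum_bijective (flipAt B · i)
    (Function.Involutive.bijective fun y => flipAt_flipAt B y i) _ _ fun y => ?_
  rw [restrictTo_flipAt]
  by_cases hy : restrictTo hAB y = z
  · rw [if_pos hy, if_pos (congrArg (flipAt A · i) hy), hν y, hy]
  · have hy' : flipAt A (restrictTo hAB y) i ≠ flipAt A z i := fun h' =>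
      hy (by simpa only [flipAt_flipAt] using congrArg (flipAt A · i) h')
    rw [if_neg hy, if_neg hy', zero_mul]

lemma _root_.Set.EqOn.flip {x x' : Config V} {s : Set V} (hxx' : Set.EqOn x x' s) {i : V}
    (hi : i ∈ s) : Set.EqOn (flip x i) (flip x' i) s := by
  intro j hj
  by_cases hji : j = i
  · subst hji
    simp [GibbsLP.flip, hxx' hi]
  · simp [GibbsLP.flip, hji, hxx' hj]

def IsNearestNeighbor (G : SimpleGraph V) (H : Config V → ℝ) : Prop :=
  ∀ i x x', Set.EqOn x x' (insert i (G.neighborSet i)) → grad H i x = grad H i x'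

end

variable {V : Type*} [Fintype V] [DecidableEq V]

lemma SupportedOn.eq_of_eqOn {f : Config V → ℝ} {S : Set V} (hf : SupportedOn f S)
    {x x' : Config V} (hxx' : Set.EqOn x x' S) : f x = f x' := by
  set D := Finset.univ.filter fun i => x i ≠ x' i
  have hD : D.piecewise x' x = x' := by
    funext j
    by_cases hj : j ∈ D
    · rw [Finset.piecewise_eq_of_mem _ _ _ hj]
    · rw [Finset.piecewise_eq_of_notMem _ _ _ hj]
      simpa [D] using hj
  rw [← hD, hf.apply_piecewise D fun i hi hiS => (Finset.mem_filter.mp hi).2 (hxx' hiS)]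

lemma ham_isNearestNeighbor (G : SimpleGraph V) [DecidableRel G.Adj] (β : ℝ)
    (h : V → V → Bool → Bool → ℝ) : IsNearestNeighbor G (ham G β h) := by
  intro i x x' hxx'
  have hflip := hxx'.flip (Set.mem_insert i _)
  -- Only the edges at `i` feel the flip, and both their endpoints lie in the closed neighbourhood.
  have hedge : ∀ k j,
      (if G.Adj k j then h k j (flip x i k) (flip x i j) else 0) -
        (if G.Adj k j then h k j (x k) (x j) else 0) =
      (if G.Adj k j then h k j (flip x' i k) (flip x' i j) else 0) -
        (if G.Adj k j then h k j (x' k) (x' j) else 0) := by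
    intro k j
    by_cases hadj : G.Adj k j
    · simp only [if_pos hadj]
      by_cases hki : k = i
      · subst hki
        have hj : j ∈ insert k (G.neighborSet k) := Set.mem_insert_of_mem _ hadj
        rw [hflip (Set.mem_insert k _), hflip hj, hxx' (Set.mem_insert k _), hxx' hj]
      by_cases hji : j = i
      · subst hji
        have hk : k ∈ insert j (G.neighborSet j) := Set.mem_insert_of_mem _ hadj.symm
        rw [hflip (Set.mem_insert j _), hflip hk, hxx' (Set.mem_insert j _), hxx' hk]
      simp [flip, hki, hji]
    · simp [hadj]
  simp only [grad, ham, ← mul_sub, ← Finset.sum_sub_distrib, hedge]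

lemma lexp_margTo {A B : Finset V} (hAB : A ⊆ B) (ν : SubConfig B → ℝ) {f : Config V → ℝ}
    (hf : SupportedOn f A) : lexp (margTo hAB ν) f = lexp ν f := by
  change ∑ z, (∑ y, if restrictTo hAB y = z then ν y else 0) * f (extendC A z) = _
  simp only [Finset.sum_mul, ite_mul, zero_mul]
  rw [Finset.sum_comm]
  refine Finset.sum_congr rfl fun y _ => ?_
  rw [Finset.sum_ite_eq, if_pos (Finset.mem_univ _),
    hf.eq_of_eqOn (extendC_restrictTo_eqOn hAB y)]

section Closure

variable (G : SimpleGraph V) [DecidableRel G.Adj]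

lemma insert_neighborSet_subset_closure {Λ : Finset V} {i : V} (hi : i ∈ Λ) :
    insert i (G.neighborSet i) ⊆ closure G Λ := by
  rintro j (rfl | hadj)
  · exact Finset.mem_union_left _ hi
  · by_cases hj : j ∈ Λ
    · exact Finset.mem_union_left _ hj
    · exact Finset.mem_union_right _ (by simpa [extBoundary] using ⟨hj, i, hi, hadj⟩)

lemma gradH_restrictTo {H : Config V → ℝ} (hH : IsNearestNeighbor G H) {Λ Λ' : Finset V}
    (hΛ : Λ ⊆ Λ') {i : V} (hi : i ∈ Λ) (y : SubConfig (closure G Λ')) :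
    gradH (closure G Λ) H i (restrictTo (closure_mono G hΛ) y) = gradH (closure G Λ') H i y :=
  hH i _ _ ((extendC_restrictTo_eqOn _ y).mono (insert_neighborSet_subset_closure G hi))

lemma margTo_mem_LPdlr {H : Config V → ℝ} (hH : IsNearestNeighbor G H) {Λ Λ' : Finset V}
    (hΛ : Λ ⊆ Λ') {ν : SubConfig (closure G Λ') → ℝ} (hν : ν ∈ LPdlr G H Λ') :
    margTo (closure_mono G hΛ) ν ∈ LPdlr G H Λ := by
  refine ⟨hν.1.margTo _, fun z i hi => margTo_eq_margTo_flipAt_mul _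
    (fun z => Real.exp (gradH (closure G Λ) H i z)) (fun y => ?_) z⟩
  rw [gradH_restrictTo G hH hΛ hi]
  exact hν.2 y i (hΛ hi)

lemma dlrVals_subset_of_subset {H : Config V → ℝ} (hH : IsNearestNeighbor G H)
    {Λ Λ' : Finset V} (hΛ : Λ ⊆ Λ') {f : Config V → ℝ} (hf : SupportedOn f Λ) :
    dlrVals G H Λ' f ⊆ dlrVals G H Λ f := by
  rintro t ⟨ν, hν, rfl⟩
  refine ⟨_, margTo_mem_LPdlr G hH hΛ hν, (lexp_margTo _ ν ?_).symm⟩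
  exact hf.mono (Finset.coe_subset.mpr Finset.subset_union_left)

lemma dlrVals_subset_Icc (H : Config V → ℝ) (Λ : Finset V) (f : Config V → ℝ) :
    dlrVals G H Λ f ⊆ Set.Icc (-∑ z : SubConfig (closure G Λ), |f (extendC _ z)|)
      (∑ z : SubConfig (closure G Λ), |f (extendC _ z)|) := by
  rintro t ⟨ν, hν, rfl⟩
  exact abs_le.mp (hν.1.abs_lexp_le f)

end Closure

theorem LPdlr_monotone_general (G : SimpleGraph V) [DecidableRel G.Adj]
    (β : ℝ) (h : V → V → Bool → Bool → ℝ)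
    (Λ Λ' : Finset V) (hΛ : Λ ⊆ Λ')
    (ν' : SubConfig (closure G Λ') → ℝ) (hν' : ν' ∈ LPdlr G (ham G β h) Λ') :
    margTo (closure_mono G hΛ) ν' ∈ LPdlr G (ham G β h) Λ ∧
    ∀ f : Config V → ℝ, SupportedOn f ↑Λ →
      sInf (dlrVals G (ham G β h) Λ f) ≤ sInf (dlrVals G (ham G β h) Λ' f) ∧
      sSup (dlrVals G (ham G β h) Λ' f) ≤ sSup (dlrVals G (ham G β h) Λ f) := by
  have hH := ham_isNearestNeighbor G β h
  refine ⟨margTo_mem_LPdlr G hH hΛ hν', fun f hf => ?_⟩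
  have hsub := dlrVals_subset_of_subset G hH hΛ hf
  have hne : (dlrVals G (ham G β h) Λ' f).Nonempty := ⟨lexp ν' f, ν', hν', rfl⟩
  have hbdd := dlrVals_subset_Icc G (ham G β h) Λ f
  exact ⟨csInf_le_csInf (bddBelow_Icc.mono hbdd) hne hsub,
    csSup_le_csSup (bddAbove_Icc.mono hbdd) hne hsub⟩

/-- Monotonicity of the DLR hierarchy: if `Λ ⊆ Λ'` and
`ν' ∈ LP_{Λ',DLR}`, then the marginal of `ν'` on `Σ^{Λ̄}` belongs to `LP_{Λ,DLR}`.
Consequently the optimal values are nested. -/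
theorem LPdlr_monotone (G : SimpleGraph V) [DecidableRel G.Adj]
    (β : ℝ) (hβ : 0 ≤ β) (h : V → V → Bool → Bool → ℝ)
    (hsym : ∀ i j a b, h i j a b = h i j b a) (hsym' : ∀ i j, h i j = h j i)
    (Λ Λ' : Finset V) (hΛ : Λ ⊆ Λ')
    (ν' : SubConfig (closure G Λ') → ℝ) (hν' : ν' ∈ LPdlr G (ham G β h) Λ') :
    margTo (closure_mono G hΛ) ν' ∈ LPdlr G (ham G β h) Λ ∧
    ∀ f : Config V → ℝ, SupportedOn f ↑Λ →
      sInf (dlrVals G (ham G β h) Λ f) ≤ sInf (dlrVals G (ham G β h) Λ' f) ∧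
      sSup (dlrVals G (ham G β h) Λ' f) ≤ sSup (dlrVals G (ham G β h) Λ f) :=
  LPdlr_monotone_general G β h Λ Λ' hΛ ν' hν'

end GibbsLP
end

section
/- Assume the Gibbs distribution μ has the spatial mixing property with constants C₁, C₂ > 0. Then for every B ⊆ Λ ⊆ V and every f : S → ℝ supported on B, any two feasible points ν, ν' ∈ LP_{Λ,DLR} satisfy |ν(f) - ν'(f)| ≤ ‖f‖_∞ · C₁ · |B| · |∂^ex Λ| · exp(-C₂ · dist(B, Λ^c)); in particular, max{ν(f) : ν ∈ LP_{Λ,DLR}} - min{ν(f) : ν ∈ LP_{Λ,DLR}} ≤ ‖f‖_∞ · C₁ · |B| · |∂^ex Λ| · exp(-C₂ · dist(B, Λ^c)). -/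
namespace GibbsLP

variable {V : Type*} [Fintype V] [DecidableEq V]

/-- The spatial mixing (weak decay of correlations) property of Definition 3: for all
`B ⊆ Λ`, all `f` supported on `B`, and all boundary conditions `η, τ`,
`|μ_Λ^η(f) - μ_Λ^τ(f)| ≤ ‖f‖_∞ C₁ |B| |∂ᵉˣΛ| e^{-C₂ dist(B, Λᶜ)}`
(stated for every `r` with `r ≤ dist(i,j)` for all `i ∈ B`, `j ∉ Λ`). -/
def SpatialMixing (G : SimpleGraph V) [DecidableRel G.Adj]
    (β : ℝ) (h : V → V → Bool → Bool → ℝ) (C₁ C₂ : ℝ) : Prop :=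
  ∀ B Λ : Finset V, B ⊆ Λ → ∀ f : Config V → ℝ, SupportedOn f ↑B →
    ∀ r : ℕ, (∀ i ∈ B, ∀ j ∉ Λ, (r : ℕ∞) ≤ G.edist i j) →
    ∀ η τ : SubConfig (extBoundary G Λ),
      |gibbsLocExp G β h Λ η f - gibbsLocExp G β h Λ τ f| ≤
        supNorm f * C₁ * B.card * (extBoundary G Λ).card * Real.exp (-C₂ * r)

/-!
A feasible point `ν` of the DLR program satisfies detailed balance for single spin flips inside
`Λ`. Since `H` splits as the local Hamiltonian `H_Λ^η` plus terms not involving the spins in `Λ`,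
and single flips connect all of `Σ^Λ`, the conditional law of `ν` given the boundary spins `η` is
the local Gibbs state `μ_Λ^η`. Hence `ν(f) = ∑_η ν(η) μ_Λ^η(f)` is an average of local Gibbs
expectations, and two such averages differ by at most the oscillation of `η ↦ μ_Λ^η(f)`, which
spatial mixing bounds.
-/

theorem apply_eq_of_flip_invariant {α : Type*} {g : Config V → α} {s : Set V}
    (hg : ∀ i ∈ s, ∀ x, g (flip x i) = g x) {x y : Config V}
    (hxy : ∀ i ∉ s, x i = y i) : g x = g y := by
  have hupdate : ∀ i ∈ s, ∀ x b, g (Function.update x i b) = g x := by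
    intro i hi x b
    rcases Bool.eq_or_eq_not b (x i) with rfl | rfl
    · rw [Function.update_eq_self]
    · exact hg i hi x
  suffices key : ∀ D : Finset V, ∀ x : Config V, (∀ i ∉ D, x i = y i) → ↑D ⊆ s → g x = g y by
    refine key (Finset.univ.filter fun i => x i ≠ y i) x (fun i hi => ?_) fun i hi => ?_
    · simpa using hi
    · by_contra his
      exact (Finset.mem_filter.mp hi).2 (hxy i his)
  intro D
  induction D using Finset.induction_on with
  | empty => exact fun x hx _ => congrArg g (funext fun i => hx i (Finset.notMem_empty i))
  | insert a D _ ih =>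
    intro x hx hD
    rw [← hupdate a (hD (Finset.mem_insert_self a D)) x (y a)]
    refine ih _ (fun i hi => ?_) ((Finset.coe_subset.mpr (Finset.subset_insert a D)).trans hD)
    rcases eq_or_ne i a with rfl | hia
    · exact Function.update_self ..
    · rw [Function.update_of_ne hia]
      exact hx i (by simp [hia, hi])

theorem SupportedOn.apply_eq {f : Config V → ℝ} {A : Set V} (hf : SupportedOn f A)
    {x y : Config V} (hxy : ∀ i ∈ A, x i = y i) : f x = f y :=
  apply_eq_of_flip_invariant (s := Aᶜ) (fun i hi x => hf i hi x) fun i hi => hxy i (not_not.mp hi)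

theorem SupportedOn.mono_s7 {W : Type*} [DecidableEq W] {f : Config W → ℝ} {A A' : Set W}
    (hf : SupportedOn f A) (hAA' : A ⊆ A') : SupportedOn f A' :=
  fun i hi => hf i fun hiA => hi (hAA' hiA)

theorem eq_sum_mul_gibbs_of_detailedBalance {p E : Config V → ℝ}
    (hp : ∀ x i, p x = p (flip x i) * Real.exp (E (flip x i) - E x)) (x : Config V) :
    p x = (∑ y, p y) * gibbs E x := by
  obtain ⟨c, hc⟩ : ∃ c, ∀ y, p y = c * Real.exp (-E y) := by
    refine ⟨p x * Real.exp (E x), fun y => ?_⟩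
    have hconst : p y * Real.exp (E y) = p x * Real.exp (E x) :=
      apply_eq_of_flip_invariant (g := fun z => p z * Real.exp (E z)) (s := Set.univ)
        (fun i _ z => by rw [hp z i, mul_assoc, ← Real.exp_add, sub_add_cancel])
        fun i hi => absurd (Set.mem_univ i) hi
    rw [← hconst, mul_assoc, ← Real.exp_add, add_neg_cancel, Real.exp_zero, mul_one]
  have hZ : 0 < ∑ y, Real.exp (-E y) :=
    Finset.sum_pos (fun y _ => Real.exp_pos _) Finset.univ_nonempty
  rw [gibbs, hc x, Finset.sum_congr rfl fun y _ => hc y, ← Finset.mul_sum]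
  field_simp

theorem sum_sum_eq_blocks_of_symm (φ : V → V → ℝ) (hφ : ∀ j k, φ j k = φ k j) (s : Finset V) :
    ∑ j, ∑ k, φ j k =
      ∑ j ∈ s, ∑ k ∈ s, φ j k + 2 * ∑ j ∈ s, ∑ k ∈ sᶜ, φ j k + ∑ j ∈ sᶜ, ∑ k ∈ sᶜ, φ j k := by
  have hsplit : ∀ j, ∑ k, φ j k = ∑ k ∈ s, φ j k + ∑ k ∈ sᶜ, φ j k :=
    fun j => (Finset.sum_add_sum_compl s _).symm
  have hcross : ∑ j ∈ sᶜ, ∑ k ∈ s, φ j k = ∑ j ∈ s, ∑ k ∈ sᶜ, φ j k := by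
    rw [Finset.sum_comm]
    exact Finset.sum_congr rfl fun j _ => Finset.sum_congr rfl fun k _ => hφ k j
  rw [← Finset.sum_add_sum_compl s, Finset.sum_congr rfl fun j _ => hsplit j,
    Finset.sum_congr rfl fun j _ => hsplit j, Finset.sum_add_distrib, Finset.sum_add_distrib,
    hcross]
  ring

theorem extendC_of_mem {W : Type*} [DecidableEq W] {A : Finset W} (y : SubConfig A) {k : W}
    (hk : k ∈ A) :
    extendC A y k = y ⟨k, hk⟩ :=
  dif_pos hk

section Glue

variable (G : SimpleGraph V) [DecidableRel G.Adj] (Λ : Finset V)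

theorem disjoint_extBoundary : Disjoint Λ (extBoundary G Λ) :=
  Finset.disjoint_right.mpr fun _ hj => (Finset.mem_filter.mp hj).2.1

theorem extBoundary_subset_compl : extBoundary G Λ ⊆ Λᶜ :=
  fun _ hj => Finset.mem_compl.mpr (Finset.mem_filter.mp hj).2.1

def glueEquiv : SubConfig Λ × SubConfig (extBoundary G Λ) ≃ SubConfig (closure G Λ) :=
  Equiv.piFinsetUnion (fun _ => Bool) (disjoint_extBoundary G Λ)

variable {G Λ}

theorem glueEquiv_apply (x : SubConfig Λ) (η : SubConfig (extBoundary G Λ)) :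
    glueEquiv G Λ (x, η) = glue G Λ x η := by
  funext ⟨k, hkc⟩
  by_cases hk : k ∈ Λ
  · exact (Equiv.piFinsetUnion_left _ _ hk hkc).trans (by simp [glue, hk])
  · have hkb : k ∈ extBoundary G Λ := (Finset.mem_union.mp hkc).resolve_left hk
    exact (Equiv.piFinsetUnion_right _ _ hkb hkc).trans (by simp [glue, hk])

theorem extendC_glue_of_mem (x : SubConfig Λ) (η : SubConfig (extBoundary G Λ)) {k : V}
    (hk : k ∈ Λ) : extendC (closure G Λ) (glue G Λ x η) k = x ⟨k, hk⟩ := by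
  simp [extendC, closure, glue, hk]

theorem extendC_glue_of_notMem (x : SubConfig Λ) (η : SubConfig (extBoundary G Λ)) {k : V}
    (hk : k ∉ Λ) : extendC (closure G Λ) (glue G Λ x η) k = extendC (extBoundary G Λ) η k := by
  simp [extendC, closure, glue, hk]

theorem flip_extendC_glue (x : SubConfig Λ) (η : SubConfig (extBoundary G Λ)) {i : V}
    (hi : i ∈ Λ) :
    flip (extendC (closure G Λ) (glue G Λ x η)) i
      = extendC (closure G Λ) (glue G Λ (flip x ⟨i, hi⟩) η) := by
  funext k
  by_cases hk : k ∈ Λ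
  · rw [extendC_glue_of_mem _ _ hk]
    by_cases hki : k = i
    · subst hki
      simp [flip, extendC_glue_of_mem _ _ hk]
    · simp [flip, hki, extendC_glue_of_mem _ _ hk]
  · have hki : k ≠ i := fun e => hk (e ▸ hi)
    simp [flip, Function.update_of_ne hki, extendC_glue_of_notMem _ _ hk]

theorem flipAt_glue (x : SubConfig Λ) (η : SubConfig (extBoundary G Λ)) {i : V} (hi : i ∈ Λ) :
    flipAt (closure G Λ) (glue G Λ x η) i = glue G Λ (flip x ⟨i, hi⟩) η := by
  funext k
  by_cases hk : k.1 ∈ Λ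
  · by_cases hki : k.1 = i
    · subst hki
      simp [flipAt, glue, flip, hk]
    · simp [flipAt, glue, flip, hk, hki]
  · have hki : k.1 ≠ i := fun e => hk (e ▸ hi)
    simp [flipAt, glue, hk, hki]

end Glue

section Energy

variable (G : SimpleGraph V) [DecidableRel G.Adj] (β : ℝ) (h : V → V → Bool → Bool → ℝ)
  {Λ : Finset V}

theorem ham_extendC_glue (hsym : ∀ i j a b, h i j a b = h i j b a)
    (hsym' : ∀ i j, h i j = h j i) (x : SubConfig Λ) (η : SubConfig (extBoundary G Λ)) :
    ham G β h (extendC (closure G Λ) (glue G Λ x η)) = hamLoc G β h Λ η x +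
      β * (1 / 2 * ∑ j ∈ Λᶜ, ∑ k ∈ Λᶜ, if G.Adj j k then
        h j k (extendC (extBoundary G Λ) η j) (extendC (extBoundary G Λ) η k) else 0) := by
  set z := extendC (closure G Λ) (glue G Λ x η)
  set φ : V → V → ℝ := fun j k => if G.Adj j k then h j k (z j) (z k) else 0
  have hφ : ∀ j k, φ j k = φ k j := fun j k => by
    by_cases hjk : G.Adj j k
    · simp only [φ, if_pos hjk, if_pos hjk.symm, hsym' j k, hsym k j]
    · simp only [φ, if_neg hjk, if_neg fun hkj : G.Adj k j => hjk hkj.symm]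
  have hinner : ∑ j ∈ Λ, ∑ k ∈ Λ, φ j k = ∑ i ∈ Λ.attach, ∑ j ∈ Λ.attach,
      if G.Adj i.1 j.1 then h i.1 j.1 (x i) (x j) else 0 := by
    rw [← Finset.sum_attach]
    refine Finset.sum_congr rfl fun i _ => ?_
    rw [← Finset.sum_attach]
    refine Finset.sum_congr rfl fun j _ => ?_
    simp only [φ, z, extendC_glue_of_mem x η i.2, extendC_glue_of_mem x η j.2]
  have hcross : ∑ j ∈ Λ, ∑ k ∈ Λᶜ, φ j k = ∑ i ∈ Λ.attach, ∑ j ∈ (extBoundary G Λ).attach,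
      if G.Adj i.1 j.1 then h i.1 j.1 (x i) (η j) else 0 := by
    rw [← Finset.sum_attach]
    refine Finset.sum_congr rfl fun i _ => ?_
    rw [← Finset.sum_subset (extBoundary_subset_compl G Λ) fun k hk hkb => ?_, ← Finset.sum_attach]
    · refine Finset.sum_congr rfl fun j _ => ?_
      have hj : j.1 ∉ Λ := Finset.mem_compl.mp (extBoundary_subset_compl G Λ j.2)
      simp only [φ, z, extendC_glue_of_mem x η i.2, extendC_glue_of_notMem x η hj,
        extendC_of_mem η j.2]
    · have hnadj : ¬ G.Adj i k := fun hik =>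
        hkb (Finset.mem_filter.mpr ⟨Finset.mem_univ k, Finset.mem_compl.mp hk, i, i.2, hik⟩)
      simp only [φ, if_neg hnadj]
  have houter : ∑ j ∈ Λᶜ, ∑ k ∈ Λᶜ, φ j k = ∑ j ∈ Λᶜ, ∑ k ∈ Λᶜ, if G.Adj j k then
      h j k (extendC (extBoundary G Λ) η j) (extendC (extBoundary G Λ) η k) else 0 :=
    Finset.sum_congr rfl fun j hj => Finset.sum_congr rfl fun k hk => by
      simp only [φ, z, extendC_glue_of_notMem x η (Finset.mem_compl.mp hj),
        extendC_glue_of_notMem x η (Finset.mem_compl.mp hk)]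
  rw [ham, sum_sum_eq_blocks_of_symm φ hφ Λ, hinner, hcross, houter, hamLoc]
  ring

theorem gradH_glue (hsym : ∀ i j a b, h i j a b = h i j b a) (hsym' : ∀ i j, h i j = h j i)
    (x : SubConfig Λ) (η : SubConfig (extBoundary G Λ)) {i : V} (hi : i ∈ Λ) :
    gradH (closure G Λ) (ham G β h) i (glue G Λ x η)
      = hamLoc G β h Λ η (flip x ⟨i, hi⟩) - hamLoc G β h Λ η x := by
  rw [gradH, flip_extendC_glue x η hi, ham_extendC_glue G β h hsym hsym',
    ham_extendC_glue G β h hsym hsym']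
  ring

end Energy

section DLR

variable {G : SimpleGraph V} [DecidableRel G.Adj] {Λ : Finset V}

theorem sum_eq_sum_sum_glue (F : SubConfig (closure G Λ) → ℝ) :
    ∑ y, F y = ∑ η : SubConfig (extBoundary G Λ), ∑ x : SubConfig Λ, F (glue G Λ x η) := by
  rw [← (glueEquiv G Λ).sum_comp, Fintype.sum_prod_type_right]
  simp only [glueEquiv_apply]

variable (G Λ) in
def bdryMarginal (ν : SubConfig (closure G Λ) → ℝ) (η : SubConfig (extBoundary G Λ)) : ℝ :=
  ∑ x : SubConfig Λ, ν (glue G Λ x η)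

theorem IsDist.bdryMarginal {ν : SubConfig (closure G Λ) → ℝ} (hν : IsDist ν) :
    IsDist (bdryMarginal G Λ ν) :=
  ⟨fun _ => Finset.sum_nonneg fun _ _ => hν.1 _, (sum_eq_sum_sum_glue ν).symm.trans hν.2⟩

variable {β : ℝ} {h : V → V → Bool → Bool → ℝ} {ν : SubConfig (closure G Λ) → ℝ}

theorem apply_glue_of_mem_LPdlr (hsym : ∀ i j a b, h i j a b = h i j b a)
    (hsym' : ∀ i j, h i j = h j i) (hν : ν ∈ LPdlr G (ham G β h) Λ)
    (x : SubConfig Λ) (η : SubConfig (extBoundary G Λ)) :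
    ν (glue G Λ x η) = bdryMarginal G Λ ν η * gibbsLoc G β h Λ η x := by
  refine eq_sum_mul_gibbs_of_detailedBalance (p := fun x => ν (glue G Λ x η)) (fun x i => ?_) x
  have hdlr := hν.2 (glue G Λ x η) i.1 i.2
  rwa [flipAt_glue x η i.2, gradH_glue G β h hsym hsym' x η i.2] at hdlr

theorem lexp_eq_sum_bdryMarginal_mul (hsym : ∀ i j a b, h i j a b = h i j b a)
    (hsym' : ∀ i j, h i j = h j i) (hν : ν ∈ LPdlr G (ham G β h) Λ) {f : Config V → ℝ}
    (hf : SupportedOn f Λ) :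
    lexp ν f = ∑ η, bdryMarginal G Λ ν η * gibbsLocExp G β h Λ η f := by
  rw [lexp, sum_eq_sum_sum_glue]
  refine Finset.sum_congr rfl fun η _ => ?_
  rw [gibbsLocExp, Finset.mul_sum]
  refine Finset.sum_congr rfl fun x _ => ?_
  have hfx : f (extendC (closure G Λ) (glue G Λ x η)) = f (extendC Λ x) :=
    hf.apply_eq fun k hk => by rw [extendC_glue_of_mem x η hk, extendC_of_mem x hk]
  rw [hfx, apply_glue_of_mem_LPdlr hsym hsym' hν, mul_assoc]

end DLR

section Averages

variable {α : Type*} [Fintype α] {w w' g : α → ℝ}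

theorem IsDist.sum_mul_le (hw : IsDist w) {c : ℝ} (hg : ∀ a, g a ≤ c) :
    ∑ a, w a * g a ≤ c :=
  calc ∑ a, w a * g a ≤ ∑ a, w a * c :=
        Finset.sum_le_sum fun a _ => mul_le_mul_of_nonneg_left (hg a) (hw.1 a)
    _ = c := by rw [← Finset.sum_mul, hw.2, one_mul]

theorem IsDist.le_sum_mul (hw : IsDist w) {c : ℝ} (hg : ∀ a, c ≤ g a) :
    c ≤ ∑ a, w a * g a :=
  calc c = ∑ a, w a * c := by rw [← Finset.sum_mul, hw.2, one_mul]
    _ ≤ ∑ a, w a * g a :=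
        Finset.sum_le_sum fun a _ => mul_le_mul_of_nonneg_left (hg a) (hw.1 a)

theorem IsDist.abs_sum_mul_sub_sum_mul_le (hw : IsDist w) (hw' : IsDist w') {M : ℝ}
    (hg : ∀ a b, |g a - g b| ≤ M) : |∑ a, w a * g a - ∑ a, w' a * g a| ≤ M := by
  have hle : ∀ {u u' : α → ℝ}, IsDist u → IsDist u' →
      ∑ a, u a * g a - ∑ a, u' a * g a ≤ M := fun {u u'} hu hu' => by
    have hlow : ∀ a, g a - M ≤ ∑ b, u' b * g b := fun a =>
      hu'.le_sum_mul fun b => by linarith [(abs_le.mp (hg a b)).2]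
    linarith [hu.sum_mul_le fun a => (by linarith [hlow a] : g a ≤ ∑ b, u' b * g b + M)]
  exact abs_sub_le_iff.mpr ⟨hle hw hw', hle hw' hw⟩

end Averages

theorem LPdlr_convergence_of_spatialMixing_general (G : SimpleGraph V) [DecidableRel G.Adj]
    (β : ℝ) (h : V → V → Bool → Bool → ℝ)
    (hsym : ∀ i j a b, h i j a b = h i j b a) (hsym' : ∀ i j, h i j = h j i)
    (C₁ C₂ : ℝ)
    (hmix : SpatialMixing G β h C₁ C₂)
    (B Λ : Finset V) (hBΛ : B ⊆ Λ) (f : Config V → ℝ) (hf : SupportedOn f ↑B)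
    (r : ℕ) (hr : ∀ i ∈ B, ∀ j ∉ Λ, (r : ℕ∞) ≤ G.edist i j) :
    (∀ ν ∈ LPdlr G (ham G β h) Λ, ∀ ν' ∈ LPdlr G (ham G β h) Λ,
      |lexp ν f - lexp ν' f| ≤
        supNorm f * C₁ * B.card * (extBoundary G Λ).card * Real.exp (-C₂ * r)) ∧
    sSup (dlrVals G (ham G β h) Λ f) - sInf (dlrVals G (ham G β h) Λ f) ≤
      supNorm f * C₁ * B.card * (extBoundary G Λ).card * Real.exp (-C₂ * r) := by
  set M := supNorm f * C₁ * B.card * (extBoundary G Λ).card * Real.exp (-C₂ * r)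
  have hosc : ∀ η τ, |gibbsLocExp G β h Λ η f - gibbsLocExp G β h Λ τ f| ≤ M :=
    hmix B Λ hBΛ f hf r hr
  have hfΛ : SupportedOn f Λ := hf.mono_s7 (Finset.coe_subset.mpr hBΛ)
  have hdiff : ∀ ν ∈ LPdlr G (ham G β h) Λ, ∀ ν' ∈ LPdlr G (ham G β h) Λ,
      |lexp ν f - lexp ν' f| ≤ M := fun ν hν ν' hν' => by
    rw [lexp_eq_sum_bdryMarginal_mul hsym hsym' hν hfΛ,
      lexp_eq_sum_bdryMarginal_mul hsym hsym' hν' hfΛ]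
    exact hν.1.bdryMarginal.abs_sum_mul_sub_sum_mul_le hν'.1.bdryMarginal hosc
  have hdist : ∀ s ∈ dlrVals G (ham G β h) Λ f, ∀ t ∈ dlrVals G (ham G β h) Λ f, dist s t ≤ M := by
    rintro _ ⟨ν, hν, rfl⟩ _ ⟨ν', hν', rfl⟩
    exact hdiff ν hν ν' hν'
  have hM : 0 ≤ M := by simpa using hosc (fun _ => true) (fun _ => true)
  refine ⟨hdiff, ?_⟩
  rw [← Real.diam_eq (Metric.isBounded_iff.mpr ⟨M, hdist⟩)]
  exact Metric.diam_le_of_forall_dist_le hM hdist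

/-- Under spatial mixing, the DLR hierarchy converges exponentially fast:
any two feasible points `ν, ν' ∈ LP_{Λ,DLR}` give expectation values for `f` (supported
on `B ⊆ Λ`) within `‖f‖_∞ C₁ |B| |∂ᵉˣΛ| e^{-C₂ dist(B,Λᶜ)}` of each other; in particular
the max minus the min of the LP values is bounded by the same quantity. -/
theorem LPdlr_convergence_of_spatialMixing (G : SimpleGraph V) [DecidableRel G.Adj]
    (β : ℝ) (hβ : 0 ≤ β) (h : V → V → Bool → Bool → ℝ)
    (hsym : ∀ i j a b, h i j a b = h i j b a) (hsym' : ∀ i j, h i j = h j i)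
    (C₁ C₂ : ℝ) (hC₁ : 0 < C₁) (hC₂ : 0 < C₂)
    (hmix : SpatialMixing G β h C₁ C₂)
    (B Λ : Finset V) (hBΛ : B ⊆ Λ) (f : Config V → ℝ) (hf : SupportedOn f ↑B)
    (r : ℕ) (hr : ∀ i ∈ B, ∀ j ∉ Λ, (r : ℕ∞) ≤ G.edist i j) :
    (∀ ν ∈ LPdlr G (ham G β h) Λ, ∀ ν' ∈ LPdlr G (ham G β h) Λ,
      |lexp ν f - lexp ν' f| ≤
        supNorm f * C₁ * B.card * (extBoundary G Λ).card * Real.exp (-C₂ * r)) ∧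
    sSup (dlrVals G (ham G β h) Λ f) - sInf (dlrVals G (ham G β h) Λ f) ≤
      supNorm f * C₁ * B.card * (extBoundary G Λ).card * Real.exp (-C₂ * r) :=
  LPdlr_convergence_of_spatialMixing_general G β h hsym hsym' C₁ C₂ hmix B Λ hBΛ f hf r hr

end GibbsLP
end

section
/- Speed of propagation of information: assume G has n vertices and maximum degree Δ > 1, and let P be a local Markov chain on S. Let f : S → ℝ be supported on B, let Λ ⊃ B, and set r = dist(B, Λ^c). If x, x' ∈ S satisfy x_i = x'_i for all i ∈ Λ, then for every integer t ≥ 0, |P^t f(x) - P^t f(x')| ≤ ‖f‖_∞ · 8|B| · e^{v·t/n - r}, where v = e²(Δ - 1). -/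
/-!
Gradient bounds propagate like a random walk. If `|∇ⱼ g| ≤ bⱼ` for all `j`, then locality of
`P` gives `|∇ⱼ (P g)| ≤ (1 + 1/n) bⱼ + (1/n) ∑_{i ∼ j} bᵢ`, because flipping `j` changes the rates
of flipping `i` only for `i = j` or `i ∼ j`, and each rate lies in `[0, 1/n]`. Starting from
`b = 2‖f‖ 1_B` this bounds `|∇ⱼ Pᵗ f|`, and `|Pᵗ f(x) - Pᵗ f(x')|` is at most the sum of these
bounds over the sites outside `Λ`, where `x` and `x'` may differ. To control that sum, weight the
site `j` by `e^{ρ j}`, with `ρ` the graph distance to `B` truncated at `r`: as `ρ` is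
1-Lipschitz, the weighted sum grows by a factor at most `1 + (1 + eΔ)/n` per step, while the
weight is `1` on `B` and `e^r` outside `Λ`. Finally `1 + eΔ ≤ e²(Δ - 1)` for `Δ ≥ 2`.
-/

namespace GibbsLP

section Flip

variable {V : Type*} [DecidableEq V]

lemma flip_apply_self (x : Config V) (i : V) : flip x i i = !x i := by
  simp [flip]

lemma flip_apply_of_ne (x : Config V) {i j : V} (h : j ≠ i) : flip x i j = x j :=
  Function.update_of_ne h _ _

lemma flip_comm (x : Config V) (i j : V) : flip (flip x j) i = flip (flip x i) j := by
  funext k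
  by_cases hki : k = i <;> by_cases hkj : k = j <;>
    simp_all [flip_apply_self, flip_apply_of_ne]

lemma flip_injective (x : Config V) : Function.Injective (flip x) := by
  intro i j h
  by_contra hij
  simpa [flip_apply_self, flip_apply_of_ne x hij] using congrFun h i

lemma flip_ne (x : Config V) (i : V) : flip x i ≠ x := by
  intro h
  simpa [flip_apply_self] using congrFun h i

lemma grad_flip_sub_grad_comm (g : Config V → ℝ) (i j : V) (x : Config V) :
    grad g i (flip x j) - grad g i x = grad g j (flip x i) - grad g j x := by
  simp only [grad, flip_comm x i j]
  ring

end Flip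

section SupNorm

variable {α : Type*} [Finite α]

lemma abs_le_supNorm (f : α → ℝ) (a : α) : |f a| ≤ supNorm f :=
  le_ciSup (f := fun a => |f a|) (Set.finite_range _).bddAbove a

lemma supNorm_nonneg [Nonempty α] (f : α → ℝ) : 0 ≤ supNorm f :=
  (abs_nonneg _).trans (abs_le_supNorm f (Classical.arbitrary α))

end SupNorm

lemma abs_grad_le_of_supportedOn {V : Type*} [Finite V] [DecidableEq V] {f : Config V → ℝ}
    {B : Finset V} (hf : SupportedOn f ↑B) (j : V) (x : Config V) :
    |grad f j x| ≤ if j ∈ B then 2 * supNorm f else 0 := by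
  split_ifs with hj
  · calc |grad f j x| ≤ |f (flip x j)| + |f x| := abs_sub _ _
      _ ≤ 2 * supNorm f := by linarith [abs_le_supNorm f (flip x j), abs_le_supNorm f x]
  · rw [grad, hf j (Finset.mem_coe.not.2 hj) x, sub_self, abs_zero]

lemma abs_sub_le_sum_of_abs_grad_le {V : Type*} [DecidableEq V] {F : Config V → ℝ}
    {b : V → ℝ} (hb : ∀ j x, |grad F j x| ≤ b j) (D : Finset V) {x x' : Config V}
    (hD : ∀ j, x j ≠ x' j → j ∈ D) : |F x - F x'| ≤ ∑ j ∈ D, b j := by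
  induction D using Finset.induction_on generalizing x' with
  | empty =>
    obtain rfl : x = x' := funext fun j => by_contra fun hj => Finset.notMem_empty j (hD j hj)
    simp
  | @insert a D ha ih =>
    rw [Finset.sum_insert ha]
    by_cases hax : x a = x' a
    · have hD' : ∀ j, x j ≠ x' j → j ∈ D := fun j hj =>
        (Finset.mem_insert.1 (hD j hj)).resolve_left (by rintro rfl; exact hj hax)
      linarith [ih hD', (abs_nonneg _).trans (hb a x)]
    · have hD' : ∀ j, x j ≠ flip x' a j → j ∈ D := by
        intro j hj
        have hja : j ≠ a := by
          rintro rfl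
          cases hx : x j <;> cases hx' : x' j <;> simp_all [flip_apply_self]
        rw [flip_apply_of_ne x' hja] at hj
        exact (Finset.mem_insert.1 (hD j hj)).resolve_left hja
      calc |F x - F x'| ≤ |F x - F (flip x' a)| + |F (flip x' a) - F x'| := abs_sub_le _ _ _
        _ ≤ ∑ j ∈ D, b j + b a := add_le_add (ih hD') (hb a x')
        _ = b a + ∑ j ∈ D, b j := add_comm _ _

def spread {V : Type*} [Fintype V] (G : SimpleGraph V) [DecidableRel G.Adj] (ε : ℝ)
    (b : V → ℝ) (j : V) : ℝ :=
  (1 + ε) * b j + ε * ∑ i ∈ G.neighborFinset j, b i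

namespace IsLocalMC

variable {V : Type*} [Fintype V] [DecidableEq V] {G : SimpleGraph V}
  {P : Config V → Config V → ℝ}

lemma sum_erase_eq_sum_flip (hP : IsLocalMC G P) (x : Config V) (u : Config V → ℝ) :
    ∑ y ∈ Finset.univ.erase x, P x y * u y = ∑ i, P x (flip x i) * u (flip x i) := by
  rw [← Finset.sum_image (f := fun y => P x y * u y) fun i _ j _ h => flip_injective x h]
  refine (Finset.sum_subset (fun y hy => ?_) fun y hy hy' => ?_).symm
  · obtain ⟨i, -, rfl⟩ := Finset.mem_image.1 hy
    exact Finset.mem_erase.2 ⟨flip_ne x i, Finset.mem_univ _⟩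
  · have hflip : ∀ i, y ≠ flip x i := fun i hi =>
      hy' (Finset.mem_image.2 ⟨i, Finset.mem_univ _, hi.symm⟩)
    rw [hP.singleSite x y (Finset.ne_of_mem_erase hy) hflip, zero_mul]

lemma self_add_sum_flip (hP : IsLocalMC G P) (x : Config V) :
    P x x + ∑ i, P x (flip x i) = 1 := by
  have h := hP.sum_erase_eq_sum_flip x 1
  simp only [Pi.one_apply, mul_one] at h
  rw [← h, Finset.add_sum_erase _ _ (Finset.mem_univ x), hP.rowSum]

lemma mulVec_apply (hP : IsLocalMC G P) (g : Config V → ℝ) (x : Config V) :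
    ((Matrix.of P).mulVec g) x = g x + ∑ i, P x (flip x i) * grad g i x := by
  have hexpand :
      (Matrix.of P).mulVec g x = P x x * g x + ∑ y ∈ Finset.univ.erase x, P x y * g y :=
    (Finset.add_sum_erase _ _ (Finset.mem_univ x)).symm
  rw [hexpand, hP.sum_erase_eq_sum_flip]
  simp only [grad, mul_sub, Finset.sum_sub_distrib, ← Finset.sum_mul]
  linear_combination g x * hP.self_add_sum_flip x

lemma grad_mulVec (hP : IsLocalMC G P) (g : Config V → ℝ) (j : V) (x : Config V) :
    grad ((Matrix.of P).mulVec g) j x =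
      P x x * grad g j x + ∑ i, P x (flip x i) * grad g j (flip x i)
        + ∑ i, (P (flip x j) (flip (flip x j) i) - P x (flip x i)) * grad g i (flip x j) := by
  have hcomm : ∑ i, P x (flip x i) * (grad g j (flip x i) - grad g j x)
      = ∑ i, P x (flip x i) * (grad g i (flip x j) - grad g i x) :=
    Finset.sum_congr rfl fun i _ => by rw [grad_flip_sub_grad_comm]
  rw [grad, hP.mulVec_apply, hP.mulVec_apply]
  simp only [grad, mul_sub, sub_mul, Finset.sum_sub_distrib, ← Finset.sum_mul] at hcomm ⊢
  linear_combination (g x - g (flip x j)) * hP.self_add_sum_flip x - hcomm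

lemma abs_sub_rate_le (hP : IsLocalMC G P) (x y : Config V) (i : V) :
    |P y (flip y i) - P x (flip x i)| ≤ 1 / Fintype.card V :=
  abs_sub_le_of_nonneg_of_le (hP.nonneg _ _) (hP.bounded _ _ (flip_ne y i).symm)
    (hP.nonneg _ _) (hP.bounded _ _ (flip_ne x i).symm)

lemma rate_flip_eq_of_not_adj (hP : IsLocalMC G P) (x : Config V) {i j : V} (hij : i ≠ j)
    (hadj : ¬G.Adj i j) : P (flip x j) (flip (flip x j) i) = P x (flip x i) :=
  hP.locality i _ _ (flip_apply_of_ne x hij) fun _ hk =>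
    flip_apply_of_ne x fun hkj => hadj (hkj ▸ hk)

variable [DecidableRel G.Adj]

lemma abs_grad_mulVec_le (hP : IsLocalMC G P) {g : Config V → ℝ} {b : V → ℝ}
    (hb : ∀ i y, |grad g i y| ≤ b i) (j : V) (x : Config V) :
    |grad ((Matrix.of P).mulVec g) j x| ≤ spread G (1 / Fintype.card V) b j := by
  set ε : ℝ := 1 / Fintype.card V
  have hlocal : ∀ i ∉ insert j (G.neighborFinset j),
      |P (flip x j) (flip (flip x j) i) - P x (flip x i)| * b i = 0 := by
    intro i hi
    rw [Finset.mem_insert, SimpleGraph.mem_neighborFinset, not_or] at hi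
    rw [hP.rate_flip_eq_of_not_adj x hi.1 fun h => hi.2 h.symm, sub_self, abs_zero, zero_mul]
  have hneighbours : ∑ i, |P (flip x j) (flip (flip x j) i) - P x (flip x i)| * b i
      ≤ ε * b j + ε * ∑ i ∈ G.neighborFinset j, b i := by
    rw [← Finset.sum_subset (Finset.subset_univ _) fun i _ hi => hlocal i hi,
      Finset.sum_insert (G.notMem_neighborFinset_self j), Finset.mul_sum]
    refine add_le_add ?_ (Finset.sum_le_sum fun i _ => ?_) <;>
      exact mul_le_mul_of_nonneg_right (hP.abs_sub_rate_le _ _ _) ((abs_nonneg _).trans (hb _ x))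
  calc |grad ((Matrix.of P).mulVec g) j x|
      ≤ P x x * b j + ∑ i, P x (flip x i) * b j
        + ∑ i, |P (flip x j) (flip (flip x j) i) - P x (flip x i)| * b i := by
        rw [hP.grad_mulVec]
        refine (abs_add_three _ _ _).trans (add_le_add_three ?_ ?_ ?_)
        · rw [abs_mul, abs_of_nonneg (hP.nonneg x x)]
          exact mul_le_mul_of_nonneg_left (hb j x) (hP.nonneg x x)
        · refine (Finset.abs_sum_le_sum_abs _ _).trans (Finset.sum_le_sum fun i _ => ?_)
          rw [abs_mul, abs_of_nonneg (hP.nonneg _ _)]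
          exact mul_le_mul_of_nonneg_left (hb j _) (hP.nonneg _ _)
        · refine (Finset.abs_sum_le_sum_abs _ _).trans (Finset.sum_le_sum fun i _ => ?_)
          rw [abs_mul]
          exact mul_le_mul_of_nonneg_left (hb i _) (abs_nonneg _)
    _ = b j + ∑ i, |P (flip x j) (flip (flip x j) i) - P x (flip x i)| * b i := by
        rw [← Finset.sum_mul, ← add_mul, hP.self_add_sum_flip, one_mul]
    _ ≤ spread G ε b j := by
        rw [spread]
        linarith

lemma abs_grad_pow_mulVec_le (hP : IsLocalMC G P) {g : Config V → ℝ} {b : V → ℝ}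
    (hb : ∀ i y, |grad g i y| ≤ b i) (t : ℕ) (j : V) (x : Config V) :
    |grad ((Matrix.of P ^ t).mulVec g) j x| ≤ (spread G (1 / Fintype.card V))^[t] b j := by
  induction t generalizing j x with
  | zero => simpa using hb j x
  | succ t ih =>
    rw [pow_succ', ← Matrix.mulVec_mulVec, Function.iterate_succ_apply']
    exact hP.abs_grad_mulVec_le ih j x

end IsLocalMC

section Spread

variable {V : Type*} [Fintype V] {G : SimpleGraph V} [DecidableRel G.Adj] {ε : ℝ}

lemma spread_nonneg (hε : 0 ≤ ε) {b : V → ℝ} (hb : 0 ≤ b) : 0 ≤ spread G ε b := fun j =>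
  add_nonneg (mul_nonneg (by linarith) (hb j))
    (mul_nonneg hε (Finset.sum_nonneg fun i _ => hb i))

lemma iterate_spread_nonneg (hε : 0 ≤ ε) {b : V → ℝ} (hb : 0 ≤ b) (t : ℕ) :
    0 ≤ (spread G ε)^[t] b := by
  induction t with
  | zero => exact hb
  | succ t ih => rw [Function.iterate_succ_apply']; exact spread_nonneg hε ih

lemma sum_mul_spread_le {Δ : ℕ} (hdeg : ∀ v, G.degree v ≤ Δ) {a : ℝ} (ha : 0 ≤ a)
    {w : V → ℝ} (hw0 : 0 ≤ w) (hw : ∀ i j, G.Adj i j → w j ≤ a * w i) (hε : 0 ≤ ε) {b : V → ℝ}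
    (hb : 0 ≤ b) :
    ∑ j, w j * spread G ε b j ≤ (1 + ε * (1 + a * Δ)) * ∑ j, w j * b j := by
  have hswap : ∑ j, w j * ∑ i ∈ G.neighborFinset j, b i
      = ∑ i, b i * ∑ j ∈ G.neighborFinset i, w j := by
    simp only [Finset.mul_sum]
    rw [Finset.sum_comm' (t' := Finset.univ) (s' := fun i => G.neighborFinset i)
      (by simp [G.adj_comm])]
    exact Finset.sum_congr rfl fun _ _ => Finset.sum_congr rfl fun _ _ => mul_comm _ _
  have hneighbours : ∀ i, ∑ j ∈ G.neighborFinset i, w j ≤ Δ * (a * w i) := fun i =>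
    calc ∑ j ∈ G.neighborFinset i, w j ≤ ∑ _j ∈ G.neighborFinset i, a * w i :=
          Finset.sum_le_sum fun j hj => hw i j ((G.mem_neighborFinset i j).1 hj)
      _ ≤ Δ * (a * w i) := by
          rw [Finset.sum_const, G.card_neighborFinset_eq_degree, nsmul_eq_mul]
          gcongr
          · exact mul_nonneg ha (hw0 i)
          · exact_mod_cast hdeg i
  calc ∑ j, w j * spread G ε b j
      = (1 + ε) * ∑ j, w j * b j + ε * ∑ j, w j * ∑ i ∈ G.neighborFinset j, b i := by
        rw [Finset.mul_sum, Finset.mul_sum, ← Finset.sum_add_distrib]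
        exact Finset.sum_congr rfl fun j _ => by rw [spread]; ring
    _ = (1 + ε) * ∑ j, w j * b j + ε * ∑ i, b i * ∑ j ∈ G.neighborFinset i, w j := by
        rw [hswap]
    _ ≤ (1 + ε) * ∑ j, w j * b j + ε * ∑ i, b i * (Δ * (a * w i)) := by
        gcongr with i
        · exact hb i
        · exact hneighbours i
    _ = (1 + ε * (1 + a * Δ)) * ∑ j, w j * b j := by
        simp only [Finset.mul_sum]
        rw [← Finset.sum_add_distrib]
        exact Finset.sum_congr rfl fun _ _ => by ring

lemma sum_mul_iterate_spread_le {Δ : ℕ} (hdeg : ∀ v, G.degree v ≤ Δ) {a : ℝ} (ha : 0 ≤ a)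
    {w : V → ℝ} (hw0 : 0 ≤ w) (hw : ∀ i j, G.Adj i j → w j ≤ a * w i) (hε : 0 ≤ ε)
    {b : V → ℝ} (hb : 0 ≤ b) (t : ℕ) :
    ∑ j, w j * (spread G ε)^[t] b j ≤ (1 + ε * (1 + a * Δ)) ^ t * ∑ j, w j * b j := by
  induction t with
  | zero => simp
  | succ t ih =>
    rw [Function.iterate_succ_apply', pow_succ', mul_assoc]
    exact (sum_mul_spread_le hdeg ha hw0 hw hε (iterate_spread_nonneg hε hb t)).trans
      (mul_le_mul_of_nonneg_left ih (by positivity))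

end Spread

section TruncDist

variable {V : Type*} (G : SimpleGraph V) (B : Finset V) (r : ℕ)

noncomputable def truncDist (j : V) : ℕ := (min (r : ℕ∞) (B.inf fun i => G.edist i j)).toNat

lemma coe_truncDist (j : V) :
    (truncDist G B r j : ℕ∞) = min (r : ℕ∞) (B.inf fun i => G.edist i j) :=
  ENat.natCast_toNat (ne_top_of_le_ne_top (ENat.natCast_ne_top r) (min_le_left _ _))

variable {G B r}

lemma truncDist_of_mem {j : V} (hj : j ∈ B) : truncDist G B r j = 0 := by
  have h : (truncDist G B r j : ℕ∞) ≤ 0 :=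
    (coe_truncDist G B r j).trans_le ((min_le_right _ _).trans
      ((Finset.inf_le hj).trans_eq SimpleGraph.edist_self))
  exact_mod_cast nonpos_iff_eq_zero.1 h

lemma truncDist_of_le {j : V} (h : ∀ i ∈ B, (r : ℕ∞) ≤ G.edist i j) : truncDist G B r j = r := by
  have h' : (truncDist G B r j : ℕ∞) = r := by
    rw [coe_truncDist, min_eq_left (Finset.le_inf h)]
  exact_mod_cast h'

lemma truncDist_le_succ_of_adj {j k : V} (h : G.Adj j k) :
    truncDist G B r k ≤ truncDist G B r j + 1 := by
  have hinf : (B.inf fun i => G.edist i k) ≤ (B.inf fun i => G.edist i j) + 1 := by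
    rcases B.eq_empty_or_nonempty with rfl | hB
    · simp
    obtain ⟨i, hi, hij⟩ := B.exists_mem_eq_inf hB fun i => G.edist i j
    calc (B.inf fun i => G.edist i k) ≤ G.edist i k := Finset.inf_le hi
      _ ≤ G.edist i j + G.edist j k := G.edist_triangle
      _ = (B.inf fun i => G.edist i j) + 1 := by rw [hij, SimpleGraph.edist_eq_one_iff_adj.2 h]
  have h' : (truncDist G B r k : ℕ∞) ≤ truncDist G B r j + 1 := by
    rw [coe_truncDist, coe_truncDist, ← min_add_add_right]
    exact min_le_min le_self_add hinf
  exact_mod_cast h'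

end TruncDist

lemma one_add_pow_le_exp_mul {x : ℝ} (hx : 0 ≤ 1 + x) (t : ℕ) :
    (1 + x) ^ t ≤ Real.exp (x * t) :=
  calc (1 + x) ^ t ≤ Real.exp x ^ t :=
        pow_le_pow_left₀ hx (by linarith [Real.add_one_le_exp x]) t
    _ = Real.exp (x * t) := by rw [← Real.exp_nat_mul, mul_comm]

lemma one_add_exp_one_mul_le {d : ℝ} (hd : 2 ≤ d) :
    1 + Real.exp 1 * d ≤ Real.exp 1 ^ 2 * (d - 1) := by
  have he := Real.exp_one_gt_d9
  nlinarith [mul_nonneg (by nlinarith : (0 : ℝ) ≤ Real.exp 1 ^ 2 - Real.exp 1) (sub_nonneg.2 hd)]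

lemma sum_compl_iterate_spread_le {V : Type*} [Fintype V] [DecidableEq V] {G : SimpleGraph V}
    [DecidableRel G.Adj] {Δ : ℕ} (hdeg : ∀ v, G.degree v ≤ Δ) {B Λ : Finset V} {r : ℕ}
    (hr : ∀ i ∈ B, ∀ j ∉ Λ, (r : ℕ∞) ≤ G.edist i j) {ε : ℝ} (hε : 0 ≤ ε) {c : ℝ} (hc : 0 ≤ c)
    (t : ℕ) :
    ∑ j ∈ Λᶜ, (spread G ε)^[t] (fun j => if j ∈ B then c else 0) j
      ≤ c * B.card * Real.exp (ε * (1 + Real.exp 1 * Δ) * t - r) := by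
  set b : V → ℝ := fun j => if j ∈ B then c else 0
  set φ := (spread G ε)^[t] b
  set w : V → ℝ := fun j => Real.exp (truncDist G B r j)
  have hb : 0 ≤ b := fun j => by dsimp only [b]; split_ifs <;> simp [hc]
  have hφ : 0 ≤ φ := iterate_spread_nonneg hε hb t
  have hw0 : 0 ≤ w := fun j => (Real.exp_pos _).le
  have hw : ∀ i j, G.Adj i j → w j ≤ Real.exp 1 * w i := by
    intro i j h
    rw [← Real.exp_add, Real.exp_le_exp]
    have := truncDist_le_succ_of_adj (B := B) (r := r) h
    rw [add_comm]
    exact_mod_cast this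
  have hwb : ∑ j, w j * b j = c * B.card := by
    simp only [w, b, mul_ite, mul_zero]
    rw [Finset.sum_ite_mem, Finset.univ_inter, Finset.sum_congr rfl fun j hj => by
      rw [truncDist_of_mem hj, Nat.cast_zero, Real.exp_zero, one_mul], Finset.sum_const,
      nsmul_eq_mul, mul_comm]
  have hwΛ : ∀ j ∈ Λᶜ, 1 ≤ Real.exp (-r) * w j := fun j hj => by
    rw [← Real.exp_add, truncDist_of_le fun i hi => hr i hi j (Finset.mem_compl.1 hj)]
    simp
  calc ∑ j ∈ Λᶜ, φ j ≤ ∑ j ∈ Λᶜ, Real.exp (-r) * (w j * φ j) :=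
        Finset.sum_le_sum fun j hj => by
          rw [← mul_assoc]
          exact le_mul_of_one_le_left (hφ j) (hwΛ j hj)
    _ ≤ Real.exp (-r) * ∑ j, w j * φ j := by
        rw [← Finset.mul_sum]
        gcongr
        · exact fun j _ _ => mul_nonneg (hw0 j) (hφ j)
        · exact Finset.subset_univ _
    _ ≤ Real.exp (-r) * ((1 + ε * (1 + Real.exp 1 * Δ)) ^ t * (c * B.card)) := by
        rw [← hwb]
        gcongr
        exact sum_mul_iterate_spread_le hdeg (Real.exp_pos 1).le hw0 hw hε hb t
    _ ≤ Real.exp (-r) * (Real.exp (ε * (1 + Real.exp 1 * Δ) * t) * (c * B.card)) := by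
        gcongr
        exact one_add_pow_le_exp_mul (by positivity) t
    _ = c * B.card * Real.exp (ε * (1 + Real.exp 1 * Δ) * t - r) := by
        rw [sub_eq_add_neg, Real.exp_add]
        ring

variable {V : Type*} [Fintype V] [DecidableEq V]

theorem speed_of_propagation_general (G : SimpleGraph V) [DecidableRel G.Adj]
    (Δ : ℕ) (hΔ : 1 < Δ) (hdeg : ∀ v : V, G.degree v ≤ Δ)
    (P : Config V → Config V → ℝ) (hP : IsLocalMC G P)
    (f : Config V → ℝ) (B : Finset V) (hf : SupportedOn f ↑B)
    (Λ : Finset V)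
    (r : ℕ) (hr : ∀ i ∈ B, ∀ j ∉ Λ, (r : ℕ∞) ≤ G.edist i j)
    (x x' : Config V) (hagree : ∀ i ∈ Λ, x i = x' i) (t : ℕ) :
    |(Matrix.of P ^ t).mulVec f x - (Matrix.of P ^ t).mulVec f x'| ≤
      supNorm f * (8 * (B.card : ℝ)) *
        Real.exp (Real.exp 1 ^ 2 * ((Δ : ℝ) - 1) * t / (Fintype.card V : ℝ) - r) := by
  have hgrad := hP.abs_grad_pow_mulVec_le (abs_grad_le_of_supportedOn hf) t
  have hdisagree : ∀ j, x j ≠ x' j → j ∈ Λᶜ := fun j hj =>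
    Finset.mem_compl.2 fun hjΛ => hj (hagree j hjΛ)
  have hrate : 1 / (Fintype.card V : ℝ) * (1 + Real.exp 1 * Δ) * t
      ≤ Real.exp 1 ^ 2 * ((Δ : ℝ) - 1) * t / Fintype.card V := by
    rw [one_div_mul_eq_div, div_mul_eq_mul_div]
    gcongr
    exact one_add_exp_one_mul_le (by exact_mod_cast hΔ)
  have hs := supNorm_nonneg f
  calc |(Matrix.of P ^ t).mulVec f x - (Matrix.of P ^ t).mulVec f x'|
      ≤ ∑ j ∈ Λᶜ, (spread G (1 / Fintype.card V))^[t]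
          (fun j => if j ∈ B then 2 * supNorm f else 0) j :=
        abs_sub_le_sum_of_abs_grad_le hgrad _ hdisagree
    _ ≤ 2 * supNorm f * B.card *
          Real.exp (1 / (Fintype.card V : ℝ) * (1 + Real.exp 1 * Δ) * t - r) :=
        sum_compl_iterate_spread_le hdeg hr (by positivity) (by positivity) t
    _ ≤ supNorm f * (8 * (B.card : ℝ)) *
          Real.exp (Real.exp 1 ^ 2 * ((Δ : ℝ) - 1) * t / (Fintype.card V : ℝ) - r) := by
        have hE := Real.exp_le_exp.2 (sub_le_sub_right hrate (r : ℝ))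
        have hpos := Real.exp_pos (1 / (Fintype.card V : ℝ) * (1 + Real.exp 1 * Δ) * t - r)
        have hsB : 0 ≤ supNorm f * B.card := by positivity
        nlinarith

/-- **speed of propagation of information.** If `G` has `n` vertices and
maximum degree `Δ > 1`, `P` is a local Markov chain, `f` is supported on `B ⊆ Λ`,
`r = dist(B, Λᶜ)` and `x, x'` agree on `Λ`, then
`|P^t f(x) - P^t f(x')| ≤ ‖f‖_∞ · 8|B| · e^{v t / n - r}` with `v = e²(Δ-1)`. -/
theorem speed_of_propagation [Nonempty V] (G : SimpleGraph V) [DecidableRel G.Adj]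
    (Δ : ℕ) (hΔ : 1 < Δ) (hdeg : ∀ v : V, G.degree v ≤ Δ)
    (P : Config V → Config V → ℝ) (hP : IsLocalMC G P)
    (f : Config V → ℝ) (B : Finset V) (hf : SupportedOn f ↑B)
    (Λ : Finset V) (hBΛ : B ⊆ Λ)
    (r : ℕ) (hr : ∀ i ∈ B, ∀ j ∉ Λ, (r : ℕ∞) ≤ G.edist i j)
    (x x' : Config V) (hagree : ∀ i ∈ Λ, x i = x' i) (t : ℕ) :
    |(Matrix.of P ^ t).mulVec f x - (Matrix.of P ^ t).mulVec f x'| ≤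
      supNorm f * (8 * (B.card : ℝ)) *
        Real.exp (Real.exp 1 ^ 2 * ((Δ : ℝ) - 1) * t / (Fintype.card V : ℝ) - r) :=
  speed_of_propagation_general G Δ hΔ hdeg P hP f B hf Λ r hr x x' hagree t

end GibbsLP
end
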